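/- For every permutation σ ∈ S_n with σ(n) = n, the matrix T P(σ) Tᵗ agrees with the n×n identity matrix in its first two rows and first two columns; that is, (T P(σ) Tᵗ)_{i,j} = δ_{i,j} whenever i ≤ 2 or j ≤ 2. -/

import Mathlib

open Matrix

/-- The n×n matrix `U` from the paper: first row all ones; row `m` (1-based, m≥2)
has entries −1 in columns 1,…,n−m+1, entry n−m+1 in column n−m+2, and 0 afterwards.
Indices are 0-based here, so row `i` corresponds to `m = i+1`. -/
noncomputable def Umat (n : ℕ) : Matrix (Fin n) (Fin n) ℝ :=
  Matrix.of fun i j =>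
    if i.val = 0 then 1
    else if j.val < n - i.val then -1
    else if j.val = n - i.val then ((n : ℝ) - i.val)
    else 0

/-- The diagonal matrix `A` with `A₁₁ = 1/√n` and `A_kk = 1/√((n−k+1)(n−k+2))` for k ≥ 2
(1-based `k = i+1`). -/
noncomputable def Amat (n : ℕ) : Matrix (Fin n) (Fin n) ℝ :=
  Matrix.diagonal fun i =>
    if i.val = 0 then 1 / Real.sqrt n
    else 1 / Real.sqrt (((n : ℝ) - i.val) * ((n : ℝ) - i.val + 1))

/-- The orthogonal transform `T = A U`. -/
noncomputable def Tmat (n : ℕ) : Matrix (Fin n) (Fin n) ℝ := Amat n * Umat n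

/-- The permutation matrix `P(σ)` with `P(σ)_{i,j} = 1` iff `j = σ(i)`. -/
def Pmat (n : ℕ) (σ : Equiv.Perm (Fin n)) : Matrix (Fin n) (Fin n) ℝ :=
  Matrix.of fun i j => if j = σ i then 1 else 0

/-! `T` is orthogonal: apart from the first row `(1, …, 1)`, the rows of `U` are the Helmert
vectors `(-1, …, -1, m, 0, …, 0)`, which are pairwise orthogonal, orthogonal to `(1, …, 1)`, and
normalised by `A`. Moreover `(T P(σ) Tᵀ)ᵢⱼ = ∑ₖ Tᵢₖ Tⱼ,σ(k)`, and the first two rows of `T`,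
proportional to `(1, …, 1)` and `(-1, …, -1, n - 1)`, are invariant under every `σ` fixing the
last index. Reindexing the sum by `σ` then turns these entries into entries of `T Tᵀ = 1`. -/

lemma sum_ite_val_lt_ite_val_eq {n m : ℕ} (hm : m < n) (c d : ℝ) :
    ∑ k : Fin n, (if k.val < m then c else if k.val = m then d else 0) = m * c + d := by
  have hsplit : ∀ k : Fin n, (if k.val < m then c else if k.val = m then d else 0) =
      (if k.val < m then c else 0) + (if k = ⟨m, hm⟩ then d else 0) := by
    intro k
    simp only [Fin.ext_iff]
    split_ifs <;> first | ring1 | (exfalso; omega)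
  rw [Finset.sum_congr rfl fun k _ => hsplit k, Finset.sum_add_distrib, ← Finset.sum_filter,
    Finset.sum_const, Fin.card_filter_val_lt, min_eq_right hm.le, Finset.sum_ite_eq']
  simp

def helmert (n m : ℕ) : Fin n → ℝ := fun k => if k.val < m then -1 else if k.val = m then m else 0

section

variable {n m m' : ℕ}

lemma sum_helmert (hm : m < n) : ∑ k, helmert n m k = 0 := by
  simp only [helmert]
  rw [sum_ite_val_lt_ite_val_eq hm]
  ring

lemma sum_helmert_sq (hm : m < n) : ∑ k, helmert n m k ^ 2 = m * (m + 1) := by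
  have : ∀ k, helmert n m k ^ 2 = if k.val < m then 1 else if k.val = m then (m : ℝ) ^ 2 else 0 := by
    intro k
    simp only [helmert]
    split_ifs <;> ring
  rw [Finset.sum_congr rfl fun k _ => this k, sum_ite_val_lt_ite_val_eq hm]
  ring

lemma sum_helmert_mul_helmert_of_lt (hm : m' < n) (hlt : m' < m) :
    ∑ k, helmert n m k * helmert n m' k = 0 := by
  have : ∀ k, helmert n m k * helmert n m' k = -helmert n m' k := by
    intro k
    simp only [helmert]
    split_ifs <;> first | ring1 | (exfalso; omega)
  rw [Finset.sum_congr rfl fun k _ => this k, Finset.sum_neg_distrib, sum_helmert hm, neg_zero]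

lemma helmert_comp_of_apply_eq (σ : Equiv.Perm (Fin n)) (hm : m + 1 = n)
    (hσ : σ ⟨m, by omega⟩ = ⟨m, by omega⟩) : helmert n m ∘ σ = helmert n m := by
  have hfix : ∀ k : Fin n, (σ k).val = m ↔ k.val = m := by
    intro k
    have : σ k = σ ⟨m, by omega⟩ ↔ k = ⟨m, by omega⟩ := σ.apply_eq_iff_eq
    rwa [hσ, Fin.ext_iff, Fin.ext_iff] at this
  funext k
  have h1 := (σ k).isLt
  have h2 := k.isLt
  simp only [Function.comp_apply, helmert]
  split_ifs <;> grind

end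

def helmertNormSq (n : ℕ) (i : Fin n) : ℝ :=
  if i.val = 0 then n else ((n : ℝ) - i) * ((n : ℝ) - i + 1)

section

variable {n : ℕ}

lemma Umat_apply_of_val_eq_zero {i : Fin n} (hi : i.val = 0) (k : Fin n) : Umat n i k = 1 := by
  simp [Umat, hi]

lemma Umat_row_eq_helmert {i : Fin n} (hi : i.val ≠ 0) : Umat n i = helmert n (n - i) := by
  funext k
  simp only [Umat, helmert, of_apply, if_neg hi]
  split_ifs <;> first | rfl | push_cast [Nat.cast_sub i.isLt.le]; rfl

lemma helmertNormSq_pos (i : Fin n) : 0 < helmertNormSq n i := by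
  have hi : (i : ℝ) + 1 ≤ n := by exact_mod_cast i.isLt
  unfold helmertNormSq
  split_ifs
  · linarith
  · nlinarith

lemma sum_Umat_mul_Umat_of_ne {i j : Fin n} (hij : i ≠ j) : ∑ k, Umat n i k * Umat n j k = 0 := by
  wlog hlt : i < j generalizing i j
  · simp_rw [mul_comm (Umat n i _)]
    exact this hij.symm (lt_of_le_of_ne (not_lt.mp hlt) hij.symm)
  have hj : j.val ≠ 0 := by omega
  rw [Umat_row_eq_helmert hj]
  by_cases hi : i.val = 0
  · simpa [Umat_apply_of_val_eq_zero hi] using sum_helmert (n := n) (m := n - j) (by omega)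
  · rw [Umat_row_eq_helmert hi]
    exact sum_helmert_mul_helmert_of_lt (by omega) (by omega)

lemma sum_Umat_mul_self (i : Fin n) : ∑ k, Umat n i k * Umat n i k = helmertNormSq n i := by
  unfold helmertNormSq
  split_ifs with hi
  · simp [Umat_apply_of_val_eq_zero hi]
  · rw [Umat_row_eq_helmert hi]
    simp_rw [← sq]
    rw [sum_helmert_sq (by omega), Nat.cast_sub i.isLt.le]

lemma Umat_mul_transpose : Umat n * (Umat n)ᵀ = diagonal (helmertNormSq n) := by
  ext i j
  simp only [mul_apply, transpose_apply, diagonal_apply]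
  split_ifs with hij
  · rw [hij, sum_Umat_mul_self]
  · exact sum_Umat_mul_Umat_of_ne hij

lemma Amat_eq : Amat n = diagonal fun i => (√(helmertNormSq n i))⁻¹ := by
  unfold Amat helmertNormSq
  congr 1
  funext i
  split_ifs <;> rw [one_div]

theorem Tmat_mul_transpose : Tmat n * (Tmat n)ᵀ = 1 := by
  rw [Tmat, transpose_mul, Amat_eq, diagonal_transpose, Matrix.mul_assoc, ← Matrix.mul_assoc (Umat n),
    Umat_mul_transpose, diagonal_mul_diagonal, diagonal_mul_diagonal, ← diagonal_one]
  congr 1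
  funext i
  have hsq := Real.sq_sqrt (helmertNormSq_pos i).le
  have hpos := Real.sqrt_pos.mpr (helmertNormSq_pos i)
  field_simp
  linarith

lemma mul_Pmat_mul_transpose_apply (M N : Matrix (Fin n) (Fin n) ℝ) (σ : Equiv.Perm (Fin n))
    (i j : Fin n) : (M * Pmat n σ * Nᵀ) i j = ∑ k, M i k * N j (σ k) := by
  simp only [mul_apply, transpose_apply, Pmat, of_apply, mul_ite, mul_one, mul_zero,
    Finset.sum_mul, ite_mul, zero_mul]
  rw [Finset.sum_comm]
  simp

variable {M N : Matrix (Fin n) (Fin n) ℝ} {σ : Equiv.Perm (Fin n)} {i j : Fin n}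

lemma mul_Pmat_mul_transpose_apply_of_comp_right (hN : N j ∘ σ = N j) :
    (M * Pmat n σ * Nᵀ) i j = (M * Nᵀ) i j := by
  rw [mul_Pmat_mul_transpose_apply, mul_apply]
  exact Finset.sum_congr rfl fun k _ => by rw [transpose_apply, ← congrFun hN k, Function.comp_apply]

lemma mul_Pmat_mul_transpose_apply_of_comp_left (hM : M i ∘ σ = M i) :
    (M * Pmat n σ * Nᵀ) i j = (M * Nᵀ) i j := by
  rw [mul_Pmat_mul_transpose_apply, mul_apply, ← Equiv.sum_comp σ (fun k => M i k * Nᵀ k j)]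
  exact Finset.sum_congr rfl fun k _ => by rw [transpose_apply, ← congrFun hM k, Function.comp_apply]

lemma Umat_row_comp_of_val_le_one (hn : 0 < n) (hσ : σ ⟨n - 1, by omega⟩ = ⟨n - 1, by omega⟩)
    (hi : i.val ≤ 1) : Umat n i ∘ σ = Umat n i := by
  rcases Nat.le_one_iff_eq_zero_or_eq_one.mp hi with hi | hi
  · funext k
    simp [Umat_apply_of_val_eq_zero hi]
  · rw [Umat_row_eq_helmert (by omega), hi]
    exact helmert_comp_of_apply_eq σ (by omega) hσ

lemma Tmat_row_comp_of_Umat_row_comp (h : Umat n i ∘ σ = Umat n i) : Tmat n i ∘ σ = Tmat n i := by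
  funext k
  simp only [Function.comp_apply, Tmat, Amat, diagonal_mul]
  rw [← Function.comp_apply (f := Umat n i), h]

end

/-- For every σ ∈ Sₙ with σ(n) = n, the matrix T P(σ) Tᵗ agrees with
the identity in its first two rows and first two columns. -/
theorem stmt_13 (n : ℕ) (hn : 3 ≤ n) (σ : Equiv.Perm (Fin n))
    (hσ : σ ⟨n - 1, by omega⟩ = ⟨n - 1, by omega⟩) (i j : Fin n)
    (hij : i.val ≤ 1 ∨ j.val ≤ 1) :
    (Tmat n * Pmat n σ * (Tmat n)ᵀ) i j = if i = j then 1 else 0 := by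
  have hrow : ∀ r : Fin n, r.val ≤ 1 → Tmat n r ∘ σ = Tmat n r := fun r hr =>
    Tmat_row_comp_of_Umat_row_comp (Umat_row_comp_of_val_le_one (by omega) hσ hr)
  have horth : (Tmat n * (Tmat n)ᵀ) i j = if i = j then 1 else 0 := by
    rw [Tmat_mul_transpose, one_apply]
  rcases hij with hi | hj
  · rw [mul_Pmat_mul_transpose_apply_of_comp_left (hrow i hi), horth]
  · rw [mul_Pmat_mul_transpose_apply_of_comp_right (hrow j hj), horth]
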